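/- arXiv:2303.16729 — 2 statements merged into one kernel-verified Lean document; each statement's English description precedes it below -/
import Mathlib

section
/- For each of the parameter triples (n,k,d) ∈ {(45,6,22), (53,6,26), (60,6,30), (47,7,22), (71,7,34), (79,7,38), (93,7,46), (102,7,50), (109,7,54), (117,7,58), (124,7,62)}, there is no binary self-orthogonal [n,k,d] code, i.e., no k-dimensional self-orthogonal subspace of F_2^n whose minimum distance equals d. -/
open Finset

/-- Hamming weight of a binary vector. -/
def wt {ι : Type*} [Fintype ι] (x : ι → ZMod 2) : ℕ :=
  (Finset.univ.filter fun i => x i ≠ 0).card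

/-- A binary linear code is self-orthogonal if any two codewords are orthogonal. -/
def SelfOrthogonal {ι : Type*} [Fintype ι] (C : Submodule (ZMod 2) (ι → ZMod 2)) : Prop :=
  ∀ x ∈ C, ∀ y ∈ C, ∑ i, x i * y i = 0

/-- `C` has minimum distance exactly `d`: some nonzero codeword has weight `d`,
and every nonzero codeword has weight at least `d`. -/
def HasMinDist {ι : Type*} [Fintype ι] (C : Submodule (ZMod 2) (ι → ZMod 2)) (d : ℕ) : Prop :=
  (∃ x ∈ C, x ≠ 0 ∧ wt x = d) ∧ ∀ x ∈ C, x ≠ 0 → d ≤ wt x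

/-- The Griesmer function `g(k,d) = ∑_{i=0}^{k-1} ⌈d/2^i⌉` (ceiling division). -/
def griesmerBound (k d : ℕ) : ℕ :=
  ∑ i ∈ Finset.range k, (d + 2 ^ i - 1) / 2 ^ i

/-!
In a self-orthogonal binary code all weights are even and `wt (x + y) ≡ wt x + wt y (mod 4)`,
so `x ↦ wt x / 2 (mod 2)` is a linear functional; its kernel, the doubly-even subcode, has
codimension at most one. For `d ≡ 2 (mod 4)` the nonzero weights of that subcode are at least
`d + 2`, so the Griesmer bound gives `n ≥ g(k - 1, d + 2)`, which fails for every listed triple.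

The Griesmer bound itself comes from the residual code: masking a code by the complement of the
support of a minimum-weight word `x` kills only `x`, discards `wt x` coordinates and leaves a
code of minimum distance at least `⌈wt x / 2⌉`.
-/

variable {ι : Type*}

lemma eq_of_add_eq_zero {x y : ι → ZMod 2} (h : x + y = 0) : y = x := by
  have h2 : ∀ a b : ZMod 2, a + b = 0 → b = a := by decide
  exact funext fun i => h2 _ _ (congrFun h i)

/-- The residual code of `C` with respect to `x`, with the coordinates in the support of `x`
set to zero rather than deleted, so that it lives in the same ambient space. -/
def residualCode (C : Submodule (ZMod 2) (ι → ZMod 2)) (x : ι → ZMod 2) :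
    Submodule (ZMod 2) (ι → ZMod 2) :=
  C.map (LinearMap.mulLeft (ZMod 2) (1 - x))

lemma forall_eq_zero_of_mem_residualCode {C : Submodule (ZMod 2) (ι → ZMod 2)}
    {x : ι → ZMod 2} {S : Finset ι} (hS : ∀ y ∈ C, ∀ i ∉ S, y i = 0) :
    ∀ z ∈ residualCode C x, ∀ i ∉ S.filter (x · = 0), z i = 0 := by
  rintro _ ⟨y, hyC, rfl⟩ i hi
  have h : ∀ a : ZMod 2, a ≠ 0 → 1 - a = 0 := by decide
  rw [mem_filter, not_and_or] at hi
  rcases hi with hi | hi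
  · simp [hS y hyC i hi]
  · simp [h _ hi]

variable [Fintype ι]

lemma wt_eq_sum_val (x : ι → ZMod 2) : wt x = ∑ i, (x i).val := by
  have h : ∀ a : ZMod 2, (if a ≠ 0 then 1 else 0) = a.val := by decide
  rw [wt, card_filter]
  exact sum_congr rfl fun i _ => h (x i)

lemma wt_eq_zero_iff {x : ι → ZMod 2} : wt x = 0 ↔ x = 0 := by
  simp [wt, filter_eq_empty_iff, funext_iff]

lemma wt_add_add_two_mul_wt_mul (x y : ι → ZMod 2) :
    wt (x + y) + 2 * wt (x * y) = wt x + wt y := by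
  have h : ∀ a b : ZMod 2, (a + b).val + 2 * (a * b).val = a.val + b.val := by decide
  simp only [wt_eq_sum_val, mul_sum, ← sum_add_distrib, Pi.add_apply, Pi.mul_apply, h]

lemma wt_mul_add_wt_one_sub_mul (x y : ι → ZMod 2) :
    wt (x * y) + wt ((1 - x) * y) = wt y := by
  have h : ∀ a b : ZMod 2, (a * b).val + ((1 - a) * b).val = b.val := by decide
  simp only [wt_eq_sum_val, ← sum_add_distrib, Pi.mul_apply, Pi.sub_apply, Pi.one_apply, h]

lemma natCast_wt_mul (x y : ι → ZMod 2) : (wt (x * y) : ZMod 2) = ∑ i, x i * y i := by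
  simp only [wt_eq_sum_val, Nat.cast_sum, ZMod.natCast_zmod_val, Pi.mul_apply]

lemma exists_wt_le_of_ne_bot {C : Submodule (ZMod 2) (ι → ZMod 2)} (hC : C ≠ ⊥) :
    ∃ x ∈ C, x ≠ 0 ∧ ∀ y ∈ C, y ≠ 0 → wt x ≤ wt y := by
  obtain ⟨y, hyC, hy⟩ := (Submodule.ne_bot_iff C).mp hC
  obtain ⟨x, ⟨hxC, hx⟩, hmin⟩ :=
    Set.exists_min_image {y | y ∈ C ∧ y ≠ 0} wt (Set.toFinite _) ⟨y, hyC, hy⟩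
  exact ⟨x, hxC, hx, fun y hyC hy => hmin y ⟨hyC, hy⟩⟩

lemma griesmerBound_succ (k d : ℕ) :
    griesmerBound (k + 1) d = d + griesmerBound k ((d + 1) / 2) := by
  rw [griesmerBound, sum_range_succ', add_comm]
  congr 1
  · simp
  · refine sum_congr rfl fun i _ => ?_
    have h : (1 : ℕ) ≤ 2 ^ i := Nat.one_le_two_pow
    rw [pow_succ, mul_comm, ← Nat.div_div_eq_div_mul,
      show d + 2 * 2 ^ i - 1 = (d + 1) + (2 ^ i - 1) * 2 by omega,
      Nat.add_mul_div_right _ _ two_pos]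
    congr 1
    omega

lemma card_filter_add_wt {x : ι → ZMod 2} {S : Finset ι} (hx : ∀ i ∉ S, x i = 0) :
    #(S.filter (x · = 0)) + wt x = #S := by
  have h : S.filter (x · ≠ 0) = univ.filter (x · ≠ 0) :=
    (filter_subset_filter _ (subset_univ S)).antisymm fun i hi => by
      rw [mem_filter] at hi ⊢
      exact ⟨not_imp_comm.mp (hx i) hi.2, hi.2⟩
  rw [wt, ← h]
  exact card_filter_add_card_filter_not (x · = 0)

variable {C : Submodule (ZMod 2) (ι → ZMod 2)} {x : ι → ZMod 2}

lemma eq_zero_or_eq_of_one_sub_mul_eq_zero (hmin : ∀ y ∈ C, y ≠ 0 → wt x ≤ wt y)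
    {y : ι → ZMod 2} (hyC : y ∈ C) (hy : (1 - x) * y = 0) : y = 0 ∨ y = x := by
  refine or_iff_not_imp_left.mpr fun hy0 => eq_of_add_eq_zero (wt_eq_zero_iff.mp ?_)
  have h1 := wt_add_add_two_mul_wt_mul x y
  have h2 := wt_mul_add_wt_one_sub_mul x y
  have h3 := hmin y hyC hy0
  rw [hy, wt_eq_zero_iff.mpr rfl] at h2
  omega

lemma finrank_residualCode (hmin : ∀ y ∈ C, y ≠ 0 → wt x ≤ wt y) (hxC : x ∈ C) :
    Module.finrank (ZMod 2) C - 1 ≤ Module.finrank (ZMod 2) (residualCode C x) := by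
  set f := (LinearMap.mulLeft (ZMod 2) (1 - x)).domRestrict C
  have hker : LinearMap.ker f ≤ Submodule.span (ZMod 2) {⟨x, hxC⟩} := by
    rintro ⟨y, hyC⟩ hy
    rcases eq_zero_or_eq_of_one_sub_mul_eq_zero hmin hyC hy with rfl | rfl
    · exact Submodule.zero_mem _
    · exact Submodule.mem_span_singleton_self _
  have hdim := (Submodule.finrank_mono hker).trans (finrank_span_le_card _)
  have hrank := LinearMap.finrank_range_add_finrank_ker f
  rw [LinearMap.range_domRestrict] at hrank
  rw [Set.toFinset_singleton, card_singleton] at hdim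
  rw [residualCode]
  omega

lemma wt_le_two_mul_wt_of_mem_residualCode (hmin : ∀ y ∈ C, y ≠ 0 → wt x ≤ wt y)
    (hxC : x ∈ C) {z : ι → ZMod 2} (hz : z ∈ residualCode C x) (hz0 : z ≠ 0) : wt x ≤ 2 * wt z := by
  obtain ⟨y, hyC, rfl⟩ := hz
  have hx : (1 - x) * x = 0 := funext fun i => by
    have h : ∀ a : ZMod 2, (1 - a) * a = 0 := by decide
    exact h (x i)
  have hy0 : y ≠ 0 := by rintro rfl; exact hz0 (mul_zero _)
  have hxy0 : x + y ≠ 0 := fun h => hz0 (by rw [LinearMap.mulLeft_apply, eq_of_add_eq_zero h, hx])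
  have h1 := wt_add_add_two_mul_wt_mul x y
  have h2 := wt_mul_add_wt_one_sub_mul x y
  have h3 := hmin y hyC hy0
  have h4 := hmin (x + y) (C.add_mem hxC hyC) hxy0
  rw [LinearMap.mulLeft_apply]
  omega

theorem griesmerBound_le_card_of_forall_eq_zero (k d : ℕ) {S : Finset ι}
    (hS : ∀ y ∈ C, ∀ i ∉ S, y i = 0)
    (hk : k ≤ Module.finrank (ZMod 2) C) (hd : ∀ y ∈ C, y ≠ 0 → d ≤ wt y) :
    griesmerBound k d ≤ #S := by
  induction k generalizing d S C with
  | zero => simp [griesmerBound]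
  | succ k ih =>
    have hC : C ≠ ⊥ := by rintro rfl; simp at hk
    obtain ⟨x, hxC, hx0, hmin⟩ := exists_wt_le_of_ne_bot hC
    have hdx := hd x hxC hx0
    have hdim := finrank_residualCode hmin hxC
    have hres := ih ((d + 1) / 2) (C := residualCode C x)
      (forall_eq_zero_of_mem_residualCode hS) (by omega) fun z hz hz0 => by
        have := wt_le_two_mul_wt_of_mem_residualCode hmin hxC hz hz0
        omega
    have hcard := card_filter_add_wt (hS x hxC)
    rw [griesmerBound_succ]
    omega

theorem griesmerBound_le_card (k d : ℕ)
    (hk : k ≤ Module.finrank (ZMod 2) C) (hd : ∀ y ∈ C, y ≠ 0 → d ≤ wt y) :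
    griesmerBound k d ≤ Fintype.card ι :=
  griesmerBound_le_card_of_forall_eq_zero k d (S := univ)
    (fun _ _ i hi => absurd (mem_univ i) hi) hk hd

lemma two_dvd_wt_mul (hC : SelfOrthogonal C) {y : ι → ZMod 2} (hx : x ∈ C) (hy : y ∈ C) :
    2 ∣ wt (x * y) :=
  (ZMod.natCast_eq_zero_iff _ 2).mp ((natCast_wt_mul x y).trans (hC x hx y hy))

lemma two_dvd_wt (hC : SelfOrthogonal C) (hx : x ∈ C) : 2 ∣ wt x := by
  have h : ∀ a : ZMod 2, a * a = a := by decide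
  simpa only [show x * x = x from funext fun i => h (x i)] using two_dvd_wt_mul hC hx hx

/-- Additive because `wt (y + z) = wt y + wt z - 2 wt (y * z)` with all three weights even. -/
def halfWeightParity (hC : SelfOrthogonal C) : C →ₗ[ZMod 2] ZMod 2 :=
  AddMonoidHom.toZModLinearMap 2
    { toFun := fun y => ((wt (y : ι → ZMod 2) / 2 : ℕ) : ZMod 2)
      map_zero' := by simp [wt_eq_zero_iff.mpr]
      map_add' := fun y z => by
        rw [← Nat.cast_add, ZMod.natCast_eq_natCast_iff', Submodule.coe_add]
        have h := wt_add_add_two_mul_wt_mul (y : ι → ZMod 2) z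
        obtain ⟨a, ha⟩ := two_dvd_wt hC y.2
        obtain ⟨b, hb⟩ := two_dvd_wt hC z.2
        obtain ⟨c, hc⟩ := two_dvd_wt_mul hC y.2 z.2
        omega }

lemma four_dvd_wt_of_mem_ker_halfWeightParity (hC : SelfOrthogonal C) {y : C}
    (hy : y ∈ LinearMap.ker (halfWeightParity hC)) : 4 ∣ wt (y : ι → ZMod 2) := by
  have h := (ZMod.natCast_eq_zero_iff _ 2).mp hy
  have := two_dvd_wt hC y.2
  omega

lemma finrank_ker_halfWeightParity (hC : SelfOrthogonal C) :
    Module.finrank (ZMod 2) C - 1 ≤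
      Module.finrank (ZMod 2) (LinearMap.ker (halfWeightParity hC)) := by
  have h1 := LinearMap.finrank_range_add_finrank_ker (halfWeightParity hC)
  have h2 := (LinearMap.range (halfWeightParity hC)).finrank_le
  rw [Module.finrank_self] at h2
  omega

theorem griesmerBound_pred_add_two_le_card (hC : SelfOrthogonal C) {d : ℕ} (hd : d % 4 = 2)
    (hmin : ∀ y ∈ C, y ≠ 0 → d ≤ wt y) :
    griesmerBound (Module.finrank (ZMod 2) C - 1) (d + 2) ≤ Fintype.card ι := by
  refine griesmerBound_le_card _ _ (C := (LinearMap.ker (halfWeightParity hC)).map C.subtype)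
    (by rw [Submodule.finrank_map_subtype_eq]; exact finrank_ker_halfWeightParity hC) ?_
  rintro _ ⟨y, hy, rfl⟩ hy0
  rw [Submodule.subtype_apply] at hy0 ⊢
  have h4 := four_dvd_wt_of_mem_ker_halfWeightParity hC hy
  have hdy := hmin y y.2 hy0
  omega

theorem stmt11 : ∀ n k d : ℕ,
    (n, k, d) ∈ ([(45, 6, 22), (53, 6, 26), (60, 6, 30), (47, 7, 22), (71, 7, 34),
      (79, 7, 38), (93, 7, 46), (102, 7, 50), (109, 7, 54), (117, 7, 58),
      (124, 7, 62)] : List (ℕ × ℕ × ℕ)) →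
    ¬ ∃ C : Submodule (ZMod 2) (Fin n → ZMod 2),
      Module.finrank (ZMod 2) C = k ∧ SelfOrthogonal C ∧ HasMinDist C d := by
  rintro n k d h ⟨C, hk, hC, -, hmin⟩
  simp only [List.mem_cons, List.not_mem_nil, or_false, Prod.mk.injEq] at h
  rcases h with ⟨rfl, rfl, rfl⟩ | ⟨rfl, rfl, rfl⟩ | ⟨rfl, rfl, rfl⟩ | ⟨rfl, rfl, rfl⟩ |
    ⟨rfl, rfl, rfl⟩ | ⟨rfl, rfl, rfl⟩ | ⟨rfl, rfl, rfl⟩ | ⟨rfl, rfl, rfl⟩ | ⟨rfl, rfl, rfl⟩ |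
    ⟨rfl, rfl, rfl⟩ | ⟨rfl, rfl, rfl⟩ <;>
  · have h := griesmerBound_pred_add_two_le_card hC (by norm_num) hmin
    rw [hk, Fintype.card_fin] at h
    exact absurd h (by decide)
end

section
/- There is no binary self-orthogonal [46,6,22] code; that is, no 6-dimensional self-orthogonal subspace of F_2^46 has minimum distance 22. -/
/-!
The weight of a sum of two orthogonal binary words is the sum of their weights modulo 4, so in
a self-orthogonal code `C` the map `x ↦ wt x / 2 mod 2` is additive. A codeword of weight
`22 ≡ 2 (mod 4)` makes it nonzero, hence the doubly-even codewords form a subcode `T` with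
`|T| = 32`. In any binary linear code each coordinate is nonzero on none or exactly half of the
codewords, so the total weight of `T` is at most `46 · 16 = 736`; but the `31` nonzero words of
`T` have weight `≥ 22` and divisible by `4`, i.e. `≥ 24`, giving total weight `≥ 744`.
-/

open Finset

lemma two_mul_card_filter_eq_card_of_add_swap {V : Type*} [AddGroup V] {S : Finset V}
    {p : V → Prop} [DecidablePred p] {z : V} (hz : z + z = 0) (hS : ∀ x ∈ S, x + z ∈ S)
    (hp : ∀ x ∈ S, p (x + z) ↔ ¬p x) :
    2 * #{x ∈ S | p x} = #S := by
  have hswap : #{x ∈ S | p x} = #{x ∈ S | ¬p x} := by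
    have hinv : ∀ x, x + z + z = x := fun x => by rw [add_assoc, hz, add_zero]
    refine card_bij' (fun x _ => x + z) (fun x _ => x + z) ?_ ?_ (fun x _ => hinv x)
      (fun x _ => hinv x)
    · intro x hx
      rw [mem_filter] at hx ⊢
      exact ⟨hS x hx.1, fun h => (hp x hx.1).1 h hx.2⟩
    · intro x hx
      rw [mem_filter] at hx ⊢
      exact ⟨hS x hx.1, (hp x hx.1).2 hx.2⟩
  rw [two_mul]
  nth_rw 2 [hswap]
  exact card_filter_add_card_filter_not p

section Weight

variable {ι : Type*} [Fintype ι]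

lemma wt_zero : wt (0 : ι → ZMod 2) = 0 := by
  simp [wt]

lemma wt_add_add_two_mul_card (x y : ι → ZMod 2) :
    wt (x + y) + 2 * #{i | x i ≠ 0 ∧ y i ≠ 0} = wt x + wt y := by
  classical
  set A : Finset ι := {i | x i ≠ 0}
  set B : Finset ι := {i | y i ≠ 0}
  have hsupp : ({i | (x + y) i ≠ 0} : Finset ι) = (A \ B) ∪ (B \ A) := by
    ext i
    have key : ∀ a b : ZMod 2, a + b ≠ 0 ↔ (a ≠ 0 ∧ ¬b ≠ 0) ∨ (b ≠ 0 ∧ ¬a ≠ 0) := by decide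
    simpa [A, B] using key (x i) (y i)
  have hinter : ({i | x i ≠ 0 ∧ y i ≠ 0} : Finset ι) = A ∩ B := filter_and _ _ _
  have hA := card_sdiff_add_card_inter A B
  have hB := card_sdiff_add_card_inter B A
  rw [inter_comm] at hB
  rw [wt, hsupp, card_union_of_disjoint disjoint_sdiff_sdiff, hinter]
  change _ = #A + #B
  omega

lemma natCast_card_filter_ne_zero_and (x y : ι → ZMod 2) :
    (#{i | x i ≠ 0 ∧ y i ≠ 0} : ZMod 2) = ∑ i, x i * y i := by
  rw [← sum_boole]
  refine sum_congr rfl fun i _ => ?_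
  have key : ∀ a b : ZMod 2, (if a ≠ 0 ∧ b ≠ 0 then (1 : ZMod 2) else 0) = a * b := by decide
  exact key (x i) (y i)

variable {x y : ι → ZMod 2}

lemma two_dvd_card_filter_of_orthogonal (h : ∑ i, x i * y i = 0) :
    2 ∣ #{i | x i ≠ 0 ∧ y i ≠ 0} := by
  rwa [← ZMod.natCast_eq_zero_iff, natCast_card_filter_ne_zero_and]

lemma two_dvd_wt_of_orthogonal_self (h : ∑ i, x i * x i = 0) : 2 ∣ wt x := by
  simpa only [and_self, wt] using two_dvd_card_filter_of_orthogonal h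

lemma wt_add_modEq_of_orthogonal (h : ∑ i, x i * y i = 0) :
    wt (x + y) ≡ wt x + wt y [MOD 4] := by
  obtain ⟨m, hm⟩ := two_dvd_card_filter_of_orthogonal h
  have := wt_add_add_two_mul_card x y
  unfold Nat.ModEq
  omega

end Weight

section LinearCode

variable {ι : Type*}

lemma two_mul_card_filter_apply_ne_zero_le {T : Finset (ι → ZMod 2)}
    (hT : ∀ x ∈ T, ∀ y ∈ T, x + y ∈ T) (i : ι) :
    2 * #{x ∈ T | x i ≠ 0} ≤ #T := by
  by_cases hz : ∃ z ∈ T, z i ≠ 0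
  · obtain ⟨z, hzT, hzi⟩ := hz
    refine (two_mul_card_filter_eq_card_of_add_swap (ZModModule.add_self z)
      (fun x hx => hT x hx z hzT) fun x _ => ?_).le
    have key : ∀ a b : ZMod 2, b ≠ 0 → (a + b ≠ 0 ↔ ¬a ≠ 0) := by decide
    exact key (x i) (z i) hzi
  · push Not at hz
    rw [filter_false_of_mem fun x hx => not_not.mpr (hz x hx)]
    simp

lemma two_mul_sum_wt_le [Fintype ι] {T : Finset (ι → ZMod 2)}
    (hT : ∀ x ∈ T, ∀ y ∈ T, x + y ∈ T) :
    2 * ∑ x ∈ T, wt x ≤ Fintype.card ι * #T := by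
  have hcount : ∑ x ∈ T, wt x = ∑ i, #{x ∈ T | x i ≠ 0} := by
    simp only [wt, card_eq_sum_ones, sum_filter]
    exact sum_comm
  calc 2 * ∑ x ∈ T, wt x = ∑ i, 2 * #{x ∈ T | x i ≠ 0} := by rw [hcount, mul_sum]
    _ ≤ ∑ _i : ι, #T := sum_le_sum fun i _ => two_mul_card_filter_apply_ne_zero_le hT i
    _ = Fintype.card ι * #T := by simp

end LinearCode

section DoublyEven

variable {ι : Type*} [Fintype ι] {C : Submodule (ZMod 2) (ι → ZMod 2)}

open scoped Classical in
noncomputable def doublyEvenCodewords (C : Submodule (ZMod 2) (ι → ZMod 2)) :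
    Finset (ι → ZMod 2) :=
  {x | x ∈ C ∧ 4 ∣ wt x}

lemma mem_doublyEvenCodewords {x : ι → ZMod 2} :
    x ∈ doublyEvenCodewords C ↔ x ∈ C ∧ 4 ∣ wt x := by
  simp [doublyEvenCodewords]

lemma add_mem_doublyEvenCodewords (hC : SelfOrthogonal C) {x y : ι → ZMod 2}
    (hx : x ∈ doublyEvenCodewords C) (hy : y ∈ doublyEvenCodewords C) :
    x + y ∈ doublyEvenCodewords C := by
  rw [mem_doublyEvenCodewords] at hx hy ⊢
  have := wt_add_modEq_of_orthogonal (hC x hx.1 y hy.1)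
  unfold Nat.ModEq at this
  exact ⟨C.add_mem hx.1 hy.1, by omega⟩

lemma two_mul_card_doublyEvenCodewords (hC : SelfOrthogonal C) {x₀ : ι → ZMod 2}
    (hx₀ : x₀ ∈ C) (hw : wt x₀ % 4 = 2) :
    2 * #(doublyEvenCodewords C) = 2 ^ Module.finrank (ZMod 2) C := by
  classical
  have hcard : #{x | x ∈ C} = 2 ^ Module.finrank (ZMod 2) C := by
    have := Module.card_eq_pow_finrank (K := ZMod 2) (V := C)
    rw [ZMod.card] at this
    rw [← this, ← Fintype.card_coe]
    exact Fintype.card_congr (Equiv.subtypeEquivRight fun x => by simp)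
  rw [← hcard, doublyEvenCodewords, ← filter_filter]
  convert two_mul_card_filter_eq_card_of_add_swap (ZModModule.add_self x₀)
    (fun x hx => ?_) (fun x hx => ?_) using 3
  · simp only [mem_filter, mem_univ, true_and] at hx ⊢
    exact C.add_mem hx hx₀
  · simp only [mem_filter, mem_univ, true_and] at hx
    have h4 := wt_add_modEq_of_orthogonal (hC x hx x₀ hx₀)
    have h2 := two_dvd_wt_of_orthogonal_self (hC x hx x hx)
    unfold Nat.ModEq at h4
    omega

lemma doublyEvenCodewords_plotkin_bound (hC : SelfOrthogonal C) {e : ℕ}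
    (he : ∀ x ∈ doublyEvenCodewords C, x ≠ 0 → e ≤ wt x) :
    2 * ((#(doublyEvenCodewords C) - 1) * e) ≤ Fintype.card ι * #(doublyEvenCodewords C) := by
  set T := doublyEvenCodewords C
  have h0 : (0 : ι → ZMod 2) ∈ T :=
    mem_doublyEvenCodewords.2 ⟨C.zero_mem, by rw [wt_zero]; exact dvd_zero 4⟩
  have hlower : (#T - 1) * e ≤ ∑ x ∈ T, wt x := by
    rw [← sum_erase _ wt_zero, ← card_erase_of_mem h0, ← smul_eq_mul]
    exact card_nsmul_le_sum _ _ _ fun x hx => he x (mem_of_mem_erase hx) (ne_of_mem_erase hx)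
  calc 2 * ((#T - 1) * e) ≤ 2 * ∑ x ∈ T, wt x := Nat.mul_le_mul_left 2 hlower
    _ ≤ Fintype.card ι * #T :=
      two_mul_sum_wt_le fun x hx y hy => add_mem_doublyEvenCodewords hC hx hy

theorem SelfOrthogonal.two_mul_pow_finrank_sub_two_mul_le (hC : SelfOrthogonal C)
    {x₀ : ι → ZMod 2} (hx₀ : x₀ ∈ C) (hw : wt x₀ % 4 = 2) {e : ℕ}
    (he : ∀ x ∈ C, x ≠ 0 → 4 ∣ wt x → e ≤ wt x) :
    2 * ((2 ^ Module.finrank (ZMod 2) C - 2) * e) ≤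
      Fintype.card ι * 2 ^ Module.finrank (ZMod 2) C := by
  rw [← two_mul_card_doublyEvenCodewords hC hx₀ hw]
  have := doublyEvenCodewords_plotkin_bound hC fun x hx hx0 =>
    he x (mem_doublyEvenCodewords.1 hx).1 hx0 (mem_doublyEvenCodewords.1 hx).2
  calc 2 * ((2 * #(doublyEvenCodewords C) - 2) * e)
      = 2 * (2 * ((#(doublyEvenCodewords C) - 1) * e)) := by rw [← Nat.mul_sub_one]; ring
    _ ≤ 2 * (Fintype.card ι * #(doublyEvenCodewords C)) := Nat.mul_le_mul_left 2 this
    _ = Fintype.card ι * (2 * #(doublyEvenCodewords C)) := by ring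

end DoublyEven

theorem stmt17 :
    ¬ ∃ C : Submodule (ZMod 2) (Fin 46 → ZMod 2),
      Module.finrank (ZMod 2) C = 6 ∧ SelfOrthogonal C ∧ HasMinDist C 22 := by
  rintro ⟨C, hdim, hSO, ⟨x₀, hx₀, -, hwt₀⟩, hmin⟩
  have hbound := hSO.two_mul_pow_finrank_sub_two_mul_le hx₀ (by rw [hwt₀]) (e := 24)
    fun x hx hx0 h4 => by
      have := hmin x hx hx0
      omega
  rw [hdim, Fintype.card_fin] at hbound
  norm_num at hbound
end
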